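/- Dimension check for sl(N): the x → 0 limit of Z(x,1,1,−2,2,N), the universal quantum dimension of the Cartan product g·Y₂(β) at the sl(N) point, equals (1/9)(N−3)(N+3)(N²−1)², for all real N avoiding poles. -/

import Mathlib

/-- Contribution B(x,n,α,β,γ) of the roots with unit scalar product with θ
(Section 2 of the paper). -/
noncomputable def Bfac (x : ℝ) (n : ℕ) (a b g : ℝ) : ℝ :=
  ∏ j ∈ Finset.range n,
    (Real.sinh ((g + 2*b - ((j:ℝ) + 1 - 3) * a) * x / 4) /
        Real.sinh ((g - ((j:ℝ) + 1 - 1) * a) * x / 4)) *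
    (Real.sinh ((2*g + b - ((j:ℝ) + 1 - 3) * a) * x / 4) /
        Real.sinh ((b - ((j:ℝ) + 1 - 1) * a) * x / 4)) *
    (Real.sinh ((2*g + 2*b - ((j:ℝ) + 1 - 4) * a) * x / 4) /
        Real.sinh (-((j:ℝ) + 1) * a * x / 4))

/-- Contribution A(x,n,α,β,γ) of the black roots. -/
noncomputable def Afac (x : ℝ) (n : ℕ) (a b g : ℝ) : ℝ :=
  ∏ j ∈ Finset.range n,
    (Real.sinh ((2*g + 3*a - ((j:ℝ) + 1) * a) * x / 4) /
        Real.sinh ((2*b + a - ((j:ℝ) + 1) * a) * x / 4)) *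
    (Real.sinh ((2*g + b + 4*a - ((j:ℝ) + 1) * a) * x / 4) /
        Real.sinh ((b - ((j:ℝ) + 1) * a) * x / 4)) *
    (Real.sinh ((2*b + g + 3*a - ((j:ℝ) + 1) * a) * x / 4) /
        Real.sinh ((g + a - ((j:ℝ) + 1) * a) * x / 4))

/-- Contribution C₁(x,n,α,β,γ) of the green roots. -/
noncomputable def C1fac (x : ℝ) (n : ℕ) (a b g : ℝ) : ℝ :=
  ∏ j ∈ Finset.range n,
    Real.sinh ((2*b + 2*g + 4*a - ((j:ℝ) + 1) * a) * x / 4) /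
      Real.sinh ((2*g + 3*a - ((j:ℝ) + 1) * a) * x / 4)

/-- Contribution C₂(x,n,α,β,γ) of the red roots. -/
noncomputable def C2fac (x : ℝ) (n : ℕ) (a b : ℝ) : ℝ :=
  ∏ j ∈ Finset.range n,
    Real.sinh ((-a - 2*b + a * ((j:ℝ) + 1)) * x / 4) /
      Real.sinh (a * ((j:ℝ) + 1) * x / 4)

/-- Contribution F(x,k,l,α,β,γ) of g₂₀, g₀₂ and the remaining colored roots. -/
noncomputable def Ffac (x : ℝ) (k l : ℕ) (a b g : ℝ) : ℝ :=
  (Real.sinh ((2*b + 2*g - (2*(k:ℝ) + 2*(l:ℝ) - 3) * a) * x / 4) /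
      Real.sinh ((2*b + 2*g + 3*a) * x / 4)) *
  (Real.sinh ((2*g - (2*(l:ℝ) - 3) * a) * x / 4) / Real.sinh ((2*g + 3*a) * x / 4)) *
  (Real.sinh ((b + 2*g - ((k:ℝ) + 2*(l:ℝ) - 3) * a) * x / 4) /
      Real.sinh ((b + 2*g + 3*a) * x / 4)) *
  (Real.sinh ((b - (k:ℝ) * a) * x / 4) / Real.sinh (b * x / 4))

/-- Universal quantum dimension Z(x,k,l,α,β,γ) of the Cartan product
gᵏ·Y₂(β)ˡ: Z = F·A·B̃·C₁·C₂, with B̃(x,l,α,β,γ) = B(x,l,α,β,γ−β). -/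
noncomputable def Zdim (x : ℝ) (k l : ℕ) (a b g : ℝ) : ℝ :=
  Ffac x k l a b g * Afac x (k + l) a b g * Bfac x l a b (g - b) *
    C1fac x (k + 2*l) a b g * C2fac x k a b

/-!
As `x → 0`, every factor `sinh (c * x / 4) / sinh (d * x / 4)` of `Z` tends to `c / d`, since
`sinh` has derivative `1` at `0`. Hence each of `F`, `A`, `B̃`, `C₁`, `C₂` tends to the same
product with every `sinh (t * x / 4)` replaced by `t` (the classical dimension formula). At
`k = l = 1` and the sl(N) point `(-2, 2, N)` this is a product of seventeen ratios of affine
functions of `N`, which collapses to `(N - 3)(N + 3)(N² - 1)² / 9`.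
-/

open Filter Topology

theorem tendsto_sinh_mul_div_sinh_mul (c d : ℝ) (hd : d ≠ 0) :
    Tendsto (fun x => Real.sinh (c * x / 4) / Real.sinh (d * x / 4)) (𝓝[≠] 0) (𝓝 (c / d)) := by
  have slope_lim (t : ℝ) : Tendsto (fun x => x⁻¹ * Real.sinh (t * x / 4)) (𝓝[≠] 0) (𝓝 (t / 4)) := by
    have hderiv : HasDerivAt (fun x => Real.sinh (t * x / 4)) (t / 4) 0 := by
      simpa using ((hasDerivAt_id (0 : ℝ)).const_mul t).div_const 4 |>.sinh
    simpa using hderiv.tendsto_slope_zero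
  have h := (slope_lim c).div (slope_lim d) (by positivity)
  rw [div_div_div_cancel_right₀ four_ne_zero] at h
  refine h.congr' ?_
  filter_upwards [self_mem_nhdsWithin] with x hx
  exact mul_div_mul_left _ _ (inv_ne_zero hx)

section ClassicalLimit

variable (k l n : ℕ) (a b g : ℝ)

theorem tendsto_Ffac (h₁ : 2*b + 2*g + 3*a ≠ 0) (h₂ : 2*g + 3*a ≠ 0) (h₃ : b + 2*g + 3*a ≠ 0)
    (h₄ : b ≠ 0) :
    Tendsto (fun x => Ffac x k l a b g) (𝓝[≠] 0)
      (𝓝 ((2*b + 2*g - (2*(k:ℝ) + 2*(l:ℝ) - 3) * a) / (2*b + 2*g + 3*a) *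
        ((2*g - (2*(l:ℝ) - 3) * a) / (2*g + 3*a)) *
        ((b + 2*g - ((k:ℝ) + 2*(l:ℝ) - 3) * a) / (b + 2*g + 3*a)) *
        ((b - (k:ℝ) * a) / b))) :=
  (((tendsto_sinh_mul_div_sinh_mul _ _ h₁).mul (tendsto_sinh_mul_div_sinh_mul _ _ h₂)).mul
    (tendsto_sinh_mul_div_sinh_mul _ _ h₃)).mul (tendsto_sinh_mul_div_sinh_mul _ _ h₄)

theorem tendsto_Afac
    (h : ∀ j < n, 2*b + a - ((j:ℝ) + 1) * a ≠ 0 ∧ b - ((j:ℝ) + 1) * a ≠ 0 ∧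
      g + a - ((j:ℝ) + 1) * a ≠ 0) :
    Tendsto (fun x => Afac x n a b g) (𝓝[≠] 0)
      (𝓝 (∏ j ∈ Finset.range n,
        (2*g + 3*a - ((j:ℝ) + 1) * a) / (2*b + a - ((j:ℝ) + 1) * a) *
        ((2*g + b + 4*a - ((j:ℝ) + 1) * a) / (b - ((j:ℝ) + 1) * a)) *
        ((2*b + g + 3*a - ((j:ℝ) + 1) * a) / (g + a - ((j:ℝ) + 1) * a)))) := by
  refine tendsto_finsetProd _ fun j hj => ?_
  obtain ⟨h₁, h₂, h₃⟩ := h j (Finset.mem_range.mp hj)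
  exact ((tendsto_sinh_mul_div_sinh_mul _ _ h₁).mul (tendsto_sinh_mul_div_sinh_mul _ _ h₂)).mul
    (tendsto_sinh_mul_div_sinh_mul _ _ h₃)

theorem tendsto_Bfac (ha : a ≠ 0)
    (h : ∀ j < n, g - ((j:ℝ) + 1 - 1) * a ≠ 0 ∧ b - ((j:ℝ) + 1 - 1) * a ≠ 0) :
    Tendsto (fun x => Bfac x n a b g) (𝓝[≠] 0)
      (𝓝 (∏ j ∈ Finset.range n,
        (g + 2*b - ((j:ℝ) + 1 - 3) * a) / (g - ((j:ℝ) + 1 - 1) * a) *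
        ((2*g + b - ((j:ℝ) + 1 - 3) * a) / (b - ((j:ℝ) + 1 - 1) * a)) *
        ((2*g + 2*b - ((j:ℝ) + 1 - 4) * a) / (-((j:ℝ) + 1) * a)))) := by
  refine tendsto_finsetProd _ fun j hj => ?_
  obtain ⟨h₁, h₂⟩ := h j (Finset.mem_range.mp hj)
  have h₃ : -((j:ℝ) + 1) * a ≠ 0 := mul_ne_zero (neg_ne_zero.mpr j.cast_add_one_ne_zero) ha
  exact ((tendsto_sinh_mul_div_sinh_mul _ _ h₁).mul (tendsto_sinh_mul_div_sinh_mul _ _ h₂)).mul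
    (tendsto_sinh_mul_div_sinh_mul _ _ h₃)

theorem tendsto_C1fac (h : ∀ j < n, 2*g + 3*a - ((j:ℝ) + 1) * a ≠ 0) :
    Tendsto (fun x => C1fac x n a b g) (𝓝[≠] 0)
      (𝓝 (∏ j ∈ Finset.range n,
        (2*b + 2*g + 4*a - ((j:ℝ) + 1) * a) / (2*g + 3*a - ((j:ℝ) + 1) * a))) :=
  tendsto_finsetProd _ fun j hj =>
    tendsto_sinh_mul_div_sinh_mul _ _ (h j (Finset.mem_range.mp hj))

theorem tendsto_C2fac (ha : a ≠ 0) :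
    Tendsto (fun x => C2fac x n a b) (𝓝[≠] 0)
      (𝓝 (∏ j ∈ Finset.range n, (-a - 2*b + a * ((j:ℝ) + 1)) / (a * ((j:ℝ) + 1)))) :=
  tendsto_finsetProd _ fun j _ =>
    tendsto_sinh_mul_div_sinh_mul _ _ (mul_ne_zero ha j.cast_add_one_ne_zero)

end ClassicalLimit

/-- Dimension check for sl(N): the x → 0 limit of Z(x,1,1,−2,2,N) equals
(1/9)(N−3)(N+3)(N²−1)². -/
theorem stmt_19 (N : ℝ) (h0 : N ≠ 0) (h1 : N ≠ 1) (h2 : N ≠ 2) (h3 : N ≠ 3)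
    (hm2 : N ≠ -2) :
    Filter.Tendsto (fun x => Zdim x 1 1 (-2) 2 N) (nhdsWithin 0 {(0:ℝ)}ᶜ)
      (nhds ((1/9) * (N - 3) * (N + 3) * (N^2 - 1)^2)) := by
  convert ((((tendsto_Ffac 1 1 (-2) 2 N (by grind) (by grind) (by grind) two_ne_zero).mul
    (tendsto_Afac 2 (-2) 2 N ?_)).mul (tendsto_Bfac 1 (-2) 2 (N - 2) (by norm_num) ?_)).mul
    (tendsto_C1fac 3 (-2) 2 N ?_)).mul (tendsto_C2fac 1 (-2) 2 (by norm_num)) using 2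
  · rfl
  · simp only [Finset.prod_range_succ, Finset.prod_range_zero]
    field_simp (disch := grind)
    ring
  all_goals
    intro j hj
    interval_cases j <;> grind
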